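/- arXiv:2002.10694 — 3 statements merged into one kernel-verified Lean document; each statement's English description precedes it below -/
import Mathlib

section
/- For real symmetric matrices X, Y, Z of order n with X + Y = Z, the energy satisfies E(X) + E(Y) ≥ E(Z), where the energy of a symmetric matrix is the sum of the absolute values of its eigenvalues. -/
open Matrix
lemma aux_diag_bound {n : ℕ} (M : Matrix (Fin n) (Fin n) ℝ)
    (hM : star M * M = 1) (s : Fin n → ℝ) (hs : ∀ j, |s j| ≤ 1) (i : Fin n) :
    |(star M * diagonal s * M) i i| ≤ 1 := by
  have hentry : (star M * diagonal s * M) i i = ∑ j, s j * (M j i)^2 := by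
    rw [mul_assoc, Matrix.mul_apply]
    apply Finset.sum_congr rfl
    intro j _
    rw [Matrix.diagonal_mul, Matrix.star_apply]
    simp [pow_two]; ring
  have hsum : ∑ j, (M j i)^2 = 1 := by
    have := congrArg (fun A => A i i) hM
    simpa [Matrix.mul_apply, Matrix.one_apply, pow_two] using this
  calc |(star M * diagonal s * M) i i| ≤ ∑ j, |s j * (M j i)^2| := by
        rw [hentry]; exact Finset.abs_sum_le_sum_abs _ _
    _ ≤ ∑ j, (M j i)^2 := by
        apply Finset.sum_le_sum
        intro j _
        rw [abs_mul, abs_pow, sq_abs]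
        calc |s j| * (M j i)^2 ≤ 1 * (M j i)^2 :=
              mul_le_mul_of_nonneg_right (hs j) (sq_nonneg _)
          _ = (M j i)^2 := one_mul _
    _ = 1 := hsum

lemma trace_le_energySum {n : ℕ} (A S : Matrix (Fin n) (Fin n) ℝ) (hA : A.IsHermitian)
    (hb : ∀ i, |(star (hA.eigenvectorUnitary : Matrix (Fin n) (Fin n) ℝ) * S *
      (hA.eigenvectorUnitary : Matrix (Fin n) (Fin n) ℝ)) i i| ≤ 1) :
    trace (S * A) ≤ ∑ i, |hA.eigenvalues i| := by
  set V : Matrix (Fin n) (Fin n) ℝ := (hA.eigenvectorUnitary : Matrix (Fin n) (Fin n) ℝ) with hV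
  have hspec : A = V * diagonal hA.eigenvalues * star V := by
    have := hA.spectral_theorem
    simpa [RCLike.ofReal_real_eq_id] using this
  have htr : trace (S * A) = ∑ i, (star V * S * V) i i * hA.eigenvalues i := by
    conv_lhs => rw [hspec]
    rw [show S * (V * diagonal hA.eigenvalues * star V)
        = (S * V * diagonal hA.eigenvalues) * star V by simp [mul_assoc]]
    rw [trace_mul_comm]
    rw [show star V * (S * V * diagonal hA.eigenvalues)
        = (star V * S * V) * diagonal hA.eigenvalues by simp [mul_assoc]]
    simp [trace, Matrix.mul_diagonal, Matrix.diag]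
  rw [htr]
  calc ∑ i, (star V * S * V) i i * hA.eigenvalues i
      ≤ ∑ i, |hA.eigenvalues i| := by
        apply Finset.sum_le_sum
        intro i _
        calc (star V * S * V) i i * hA.eigenvalues i
            ≤ |(star V * S * V) i i * hA.eigenvalues i| := le_abs_self _
          _ = |(star V * S * V) i i| * |hA.eigenvalues i| := abs_mul _ _
          _ ≤ 1 * |hA.eigenvalues i| :=
              mul_le_mul_of_nonneg_right (hb i) (abs_nonneg _)
          _ = |hA.eigenvalues i| := one_mul _

/-- The energy of a real matrix: the sum of the absolute values of its
eigenvalues when the matrix is symmetric (Hermitian), and `0` otherwise. -/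
noncomputable def energy {n : ℕ} (M : Matrix (Fin n) (Fin n) ℝ) : ℝ :=
  if h : M.IsHermitian then ∑ i, |h.eigenvalues i| else 0

/-- Ky Fan's theorem: for real symmetric matrices `X, Y, Z` with `X + Y = Z`,
we have `E(X) + E(Y) ≥ E(Z)`. -/
theorem kyFan_energy_subadditive {n : ℕ} (X Y Z : Matrix (Fin n) (Fin n) ℝ)
    (hX : X.IsHermitian) (hY : Y.IsHermitian) (hZ : Z.IsHermitian)
    (hXYZ : X + Y = Z) :
    energy Z ≤ energy X + energy Y := by
  rw [energy, energy, energy, dif_pos hX, dif_pos hY, dif_pos hZ]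
  set W : Matrix (Fin n) (Fin n) ℝ := (hZ.eigenvectorUnitary : Matrix (Fin n) (Fin n) ℝ) with hW
  have hWW : star W * W = 1 := Matrix.UnitaryGroup.star_mul_self _
  have hWW' : W * star W = 1 := mul_eq_one_comm.mp hWW
  set s : Fin n → ℝ := fun j => if hZ.eigenvalues j < 0 then -1 else 1 with hs
  have hs1 : ∀ j, |s j| ≤ 1 := by
    intro j; rw [hs]; dsimp only; split <;> simp
  have hsl : ∀ j, s j * hZ.eigenvalues j = |hZ.eigenvalues j| := by
    intro j; rw [hs]; dsimp only; split
    · rw [abs_of_neg (by assumption)]; ring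
    · rw [abs_of_nonneg (not_lt.mp (by assumption))]; ring
  set S : Matrix (Fin n) (Fin n) ℝ := W * diagonal s * star W with hS
  have hspecZ : Z = W * diagonal hZ.eigenvalues * star W := by
    have := hZ.spectral_theorem
    simpa [RCLike.ofReal_real_eq_id] using this
  have htrZ : trace (S * Z) = ∑ i, |hZ.eigenvalues i| := by
    conv_lhs => rw [hspecZ]
    have : S * (W * diagonal hZ.eigenvalues * star W)
        = W * ((diagonal s * diagonal hZ.eigenvalues) * star W) := by
      rw [hS]
      rw [show W * diagonal s * star W * (W * diagonal hZ.eigenvalues * star W)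
          = W * diagonal s * (star W * W) * (diagonal hZ.eigenvalues * star W) by
        simp [mul_assoc]]
      rw [hWW]
      simp only [mul_one, mul_assoc]
    rw [this, trace_mul_comm, show diagonal s * diagonal hZ.eigenvalues * star W * W
        = diagonal s * diagonal hZ.eigenvalues * (star W * W) by simp [mul_assoc],
      hWW, mul_one, diagonal_mul_diagonal, trace_diagonal]
    exact Finset.sum_congr rfl fun j _ => hsl j
  -- bound for any Hermitian A
  have key : ∀ (A : Matrix (Fin n) (Fin n) ℝ) (hA : A.IsHermitian),
      trace (S * A) ≤ ∑ i, |hA.eigenvalues i| := by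
    intro A hA
    apply trace_le_energySum A S hA
    intro i
    set V : Matrix (Fin n) (Fin n) ℝ := (hA.eigenvectorUnitary : Matrix (Fin n) (Fin n) ℝ) with hVd
    have hVV : star V * V = 1 := Matrix.UnitaryGroup.star_mul_self _
    have hM : star (star W * V) * (star W * V) = 1 := by
      rw [Matrix.star_mul, star_star,
        show star V * W * (star W * V) = star V * (W * star W) * V by simp [mul_assoc],
        hWW', mul_one, hVV]
    have hb := aux_diag_bound (star W * V) hM s hs1 i
    have : star (star W * V) * diagonal s * (star W * V) = star V * S * V := by
      rw [Matrix.star_mul, star_star, hS]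
      simp [mul_assoc]
    rwa [this] at hb
  have hsplit : trace (S * Z) = trace (S * X) + trace (S * Y) := by
    rw [← hXYZ, mul_add, trace_add]
  calc ∑ i, |hZ.eigenvalues i| = trace (S * X) + trace (S * Y) := by rw [← htrZ, hsplit]
    _ ≤ (∑ i, |hX.eigenvalues i|) + ∑ i, |hY.eigenvalues i| :=
        add_le_add (key X hX) (key Y hY)
end

section
/- The odd moments of the semicircle distribution with parameter σ > 0 vanish, and its even moments are given by ∫ x^{2s} dΦ(x) = (2s)! σ^{2s} / (s!(s+1)!) = Catalan(s)·σ^{2s} for each natural number s. -/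
open Real

lemma odd_integral_zero (f : ℝ → ℝ) (a : ℝ) (hf : ∀ x, f (-x) = - f x) :
    (∫ x in (-a)..a, f x) = 0 := by
  have h1 : (∫ x in (-a)..a, f (-x)) = ∫ x in (-a)..a, f x := by
    rw [intervalIntegral.integral_comp_neg]
    simp
  have h2 : (∫ x in (-a)..a, f (-x)) = - ∫ x in (-a)..a, f x := by
    simp_rw [hf]
    rw [intervalIntegral.integral_neg]
  linarith [h1, h2]

lemma sinJ (s : ℕ) : (∫ x in (-(π/2))..(π/2), Real.sin x ^ (2*s)) =
    π * (2*s).factorial / (4^s * (s.factorial : ℝ)^2) := by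
  induction s with
  | zero => simp
  | succ s ih =>
    have h : 2 * (s+1) = 2*s + 2 := by ring
    rw [h, integral_sin_pow, ih]
    simp [Real.sin_pi_div_two, Real.cos_pi_div_two]
    have h4 : (4:ℝ)^(s+1) = 4 * 4^s := by ring
    have hf : ((2*s+2).factorial : ℝ) = (2*s+2) * (2*s+1) * (2*s).factorial := by
      rw [show 2*s+2 = (2*s+1)+1 from rfl, Nat.factorial_succ, Nat.factorial_succ]
      push_cast; ring
    have hf2 : ((s+1).factorial : ℝ) = (s+1) * s.factorial := by
      rw [Nat.factorial_succ]; push_cast; ring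
    rw [hf, hf2, h4]
    have hs : (s.factorial : ℝ) ≠ 0 := Nat.cast_ne_zero.mpr s.factorial_ne_zero
    field_simp
    ring

lemma sinA (s : ℕ) : (∫ x in (-(π/2))..(π/2), Real.sin x ^ (2*s) * Real.cos x ^ 2) =
    π * (2*s).factorial / (2 * 4^s * (s.factorial : ℝ) * (s+1).factorial) := by
  have hcong : (∫ x in (-(π/2))..(π/2), Real.sin x ^ (2*s) * Real.cos x ^ 2) =
      ∫ x in (-(π/2))..(π/2), (Real.sin x ^ (2*s) - Real.sin x ^ (2*s+2)) := by
    apply intervalIntegral.integral_congr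
    intro x _
    have h := Real.sin_sq_add_cos_sq x
    simp only
    have hcos : Real.cos x ^ 2 = 1 - Real.sin x ^ 2 := by linarith
    rw [hcos, pow_add]
    ring
  rw [hcong, intervalIntegral.integral_sub (by apply Continuous.intervalIntegrable; fun_prop)
    (by apply Continuous.intervalIntegrable; fun_prop)]
  have h1 := sinJ s
  have h2 := sinJ (s+1)
  rw [show 2*(s+1) = 2*s+2 from by ring] at h2
  rw [h1, h2]
  have hf2 : ((s+1).factorial : ℝ) = (s+1) * s.factorial := by
    rw [Nat.factorial_succ]; push_cast; ring
  have hf : ((2*s+2).factorial : ℝ) = (2*s+2) * (2*s+1) * (2*s).factorial := by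
    rw [show 2*s+2 = (2*s+1)+1 from rfl, Nat.factorial_succ, Nat.factorial_succ]
    push_cast; ring
  have hs : (s.factorial : ℝ) ≠ 0 := Nat.cast_ne_zero.mpr s.factorial_ne_zero
  rw [hf, hf2, show (4:ℝ)^(s+1) = 4 * 4^s from by ring]
  field_simp
  ring

lemma subst_moment (σ : ℝ) (hσ : 0 < σ) (k : ℕ) :
    (∫ x in (-(2 * σ))..(2 * σ),
        x ^ k * (1 / (2 * π * σ ^ 2) * Real.sqrt (4 * σ ^ 2 - x ^ 2))) =
    1 / (2 * π * σ ^ 2) * (2*σ)^(k+2) *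
      ∫ θ in (-(π/2))..(π/2), Real.sin θ ^ k * Real.cos θ ^ 2 := by
  set g : ℝ → ℝ := fun x => x ^ k * (1 / (2 * π * σ ^ 2) * Real.sqrt (4 * σ ^ 2 - x ^ 2)) with hg
  have hsub := intervalIntegral.integral_comp_smul_deriv
    (a := -(π/2)) (b := π/2)
    (f := fun θ => 2 * σ * Real.sin θ) (f' := fun θ => 2 * σ * Real.cos θ) (g := g)
    (fun x _ => (Real.hasDerivAt_sin x).const_mul (2*σ))
    (by fun_prop)
    (by apply Continuous.mul (by fun_prop)
        apply Continuous.mul continuous_const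
        exact Real.continuous_sqrt.comp (by fun_prop))
  simp only [Real.sin_pi_div_two, Real.sin_neg, mul_one, mul_neg, Function.comp] at hsub
  rw [← hsub]
  have hcong : (∫ θ in (-(π/2))..(π/2), (2 * σ * Real.cos θ) • g (2 * σ * Real.sin θ)) =
      ∫ θ in (-(π/2))..(π/2),
        1 / (2 * π * σ ^ 2) * (2*σ)^(k+2) * (Real.sin θ ^ k * Real.cos θ ^ 2) := by
    apply intervalIntegral.integral_congr
    intro θ hθ
    have hθ' : θ ∈ Set.Icc (-(π/2)) (π/2) := by
      rwa [Set.uIcc_of_le (by linarith [pi_pos])] at hθ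
    have hcos : 0 ≤ Real.cos θ := Real.cos_nonneg_of_mem_Icc hθ'
    have hsq : 4 * σ ^ 2 - (2 * σ * Real.sin θ) ^ 2 = (2 * σ * Real.cos θ)^2 := by
      have := Real.sin_sq_add_cos_sq θ
      nlinarith [this]
    simp only [hg, smul_eq_mul]
    rw [hsq, Real.sqrt_sq (by positivity)]
    rw [mul_pow, mul_pow]
    ring
  rw [hcong, intervalIntegral.integral_const_mul]

/-- the odd moments of the semicircle distribution with
parameter `σ > 0` vanish, and the even moments are
`(2s)!·σ^{2s}/(s!(s+1)!) = Catalan(s)·σ^{2s}`. -/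
theorem semicircle_moments (σ : ℝ) (hσ : 0 < σ) :
    (∀ k : ℕ, Odd k →
      (∫ x in (-(2 * σ))..(2 * σ),
        x ^ k * (1 / (2 * π * σ ^ 2) * Real.sqrt (4 * σ ^ 2 - x ^ 2))) = 0) ∧
    (∀ s : ℕ,
      (∫ x in (-(2 * σ))..(2 * σ),
        x ^ (2 * s) * (1 / (2 * π * σ ^ 2) * Real.sqrt (4 * σ ^ 2 - x ^ 2))) =
        ((2 * s).factorial : ℝ) * σ ^ (2 * s) /
          ((s.factorial : ℝ) * ((s + 1).factorial : ℝ)) ∧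
      ((2 * s).factorial : ℝ) * σ ^ (2 * s) /
          ((s.factorial : ℝ) * ((s + 1).factorial : ℝ)) =
        (catalan s : ℝ) * σ ^ (2 * s)) := by
  constructor
  · intro k hk
    apply odd_integral_zero
    intro x
    rw [hk.neg_pow, neg_sq]
    ring
  · intro s
    have hs : (s.factorial : ℝ) ≠ 0 := Nat.cast_ne_zero.mpr s.factorial_ne_zero
    have hs1 : ((s+1).factorial : ℝ) ≠ 0 := Nat.cast_ne_zero.mpr (s+1).factorial_ne_zero
    constructor
    · rw [subst_moment σ hσ (2*s), sinA s]
      have h2 : (2*σ)^(2*s+2) = 4 * 4^s * (σ^2 * σ^(2*s)) := by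
        rw [mul_pow, pow_add, pow_add, pow_mul]
        norm_num
        ring
      rw [h2]
      have hπ : (π:ℝ) ≠ 0 := Real.pi_ne_zero
      have hσ' : (σ:ℝ) ≠ 0 := ne_of_gt hσ
      field_simp
      ring
    · have hc : ((2*s).factorial : ℝ) = (s+1) * catalan s * s.factorial * s.factorial := by
        have h1 := succ_mul_catalan_eq_centralBinom s
        have h2 := Nat.choose_mul_factorial_mul_factorial (Nat.le_mul_of_pos_left s two_pos)
        rw [show 2*s - s = s from by omega] at h2
        rw [← h2, ← Nat.centralBinom, ← h1]
        push_cast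
        ring
      have hf2 : ((s+1).factorial : ℝ) = (s+1) * s.factorial := by
        rw [Nat.factorial_succ]; push_cast; ring
      rw [hc, hf2]
      have : ((s:ℝ)+1) ≠ 0 := by positivity
      field_simp
end

section
/- Let G be a graph of diameter 2 on n vertices. The Harary matrix RD(G), with entries 1/D(i,j) for i ≠ j and 0 on the diagonal, satisfies RD(G) = (1/2)(J - I) + (1/2)A(G), where A(G) is the adjacency matrix, J the all-ones matrix, and I the identity. Consequently |E(RD(G)) - (1/2)E(A(G))| ≤ n - 1. -/
open Matrix Finset

namespace Matrix

variable {ι : Type*} [Fintype ι]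

theorem posSemidef_of_fun_one : (of fun _ _ : ι => (1 : ℝ)).PosSemidef := by
  simpa [vecMulVec] using posSemidef_vecMulVec_self_star (fun _ : ι => (1 : ℝ))

variable [DecidableEq ι]

theorem trace_conj_diagonal_mul_conj_diagonal {R : Type*} [CommRing R]
    (U V : Matrix ι ι R) (d e : ι → R) :
    (U * diagonal d * Uᵀ * (V * diagonal e * Vᵀ)).trace =
      ∑ k, ∑ l, d k * e l * (Uᵀ * V) k l ^ 2 := by
  have hcycle : U * diagonal d * Uᵀ * (V * diagonal e * Vᵀ) =
      U * (diagonal d * (Uᵀ * V) * diagonal e * Vᵀ) := by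
    noncomm_ring
  have hsandwich : diagonal d * (Uᵀ * V) * diagonal e * Vᵀ * U =
      diagonal d * (Uᵀ * V * diagonal e * (Uᵀ * V)ᵀ) := by
    rw [transpose_mul, transpose_transpose]
    noncomm_ring
  rw [hcycle, trace_mul_comm, hsandwich, trace]
  refine sum_congr rfl fun k _ => ?_
  rw [diag_apply, diagonal_mul, mul_apply, mul_sum]
  refine sum_congr rfl fun l _ => ?_
  rw [mul_diagonal, transpose_apply]
  ring

theorem sum_apply_sq_eq_one_of_mul_transpose_eq_one {W : Matrix ι ι ℝ} (hW : W * Wᵀ = 1)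
    (k : ι) : ∑ l, W k l ^ 2 = 1 := by
  simpa [mul_apply, sq] using congrFun (congrFun hW k) k

/-- A symmetric matrix of operator norm at most `1`, presented by an orthogonal diagonalisation. -/
def IsSymmContraction (P : Matrix ι ι ℝ) : Prop :=
  ∃ (V : Matrix ι ι ℝ) (e : ι → ℝ), V * Vᵀ = 1 ∧ (∀ l, |e l| ≤ 1) ∧ P = V * diagonal e * Vᵀ

theorem IsSymmContraction.neg {P : Matrix ι ι ℝ} (hP : IsSymmContraction P) :
    IsSymmContraction (-P) := by
  obtain ⟨V, e, hV, he, rfl⟩ := hP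
  refine ⟨V, fun l => -e l, hV, fun l => by simpa using he l, ?_⟩
  rw [← diagonal_neg, Matrix.mul_neg, Matrix.neg_mul]

theorem trace_conj_diagonal_mul_le {U P : Matrix ι ι ℝ} (hU : Uᵀ * U = 1)
    (hP : IsSymmContraction P) (d : ι → ℝ) :
    (U * diagonal d * Uᵀ * P).trace ≤ ∑ k, |d k| := by
  obtain ⟨V, e, hV, he, rfl⟩ := hP
  have hW : Uᵀ * V * (Uᵀ * V)ᵀ = 1 := by
    rw [transpose_mul, transpose_transpose, Matrix.mul_assoc, ← Matrix.mul_assoc V, hV,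
      Matrix.one_mul, hU]
  rw [trace_conj_diagonal_mul_conj_diagonal]
  refine sum_le_sum fun k _ => ?_
  calc ∑ l, d k * e l * (Uᵀ * V) k l ^ 2
      ≤ ∑ l, |d k| * (Uᵀ * V) k l ^ 2 := by
        refine sum_le_sum fun l _ => mul_le_mul_of_nonneg_right ?_ (sq_nonneg _)
        calc d k * e l ≤ |d k| * |e l| := (le_abs_self _).trans (abs_mul _ _).le
          _ ≤ |d k| := mul_le_of_le_one_right (abs_nonneg _) (he l)
    _ = |d k| := by rw [← mul_sum, sum_apply_sq_eq_one_of_mul_transpose_eq_one hW, mul_one]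

theorem exists_isSymmContraction_trace_conj_diagonal_mul_eq {U : Matrix ι ι ℝ}
    (hU : Uᵀ * U = 1) (hU' : U * Uᵀ = 1) (d : ι → ℝ) :
    ∃ P, IsSymmContraction P ∧ (U * diagonal d * Uᵀ * P).trace = ∑ k, |d k| := by
  have hsign : ∀ x : ℝ, |(SignType.sign x : ℝ)| ≤ 1 := fun x => by
    rcases lt_trichotomy x 0 with hx | hx | hx <;> simp [hx]
  refine ⟨U * diagonal (fun k => (SignType.sign (d k) : ℝ)) * Uᵀ,
    ⟨U, _, hU', fun k => hsign (d k), rfl⟩, ?_⟩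
  rw [trace_conj_diagonal_mul_conj_diagonal, hU]
  simp [one_apply, self_mul_sign]

theorem IsHermitian.eq_conj_diagonal_eigenvalues {M : Matrix ι ι ℝ} (hM : M.IsHermitian) :
    let U : Matrix ι ι ℝ := hM.eigenvectorUnitary
    Uᵀ * U = 1 ∧ U * Uᵀ = 1 ∧ M = U * diagonal hM.eigenvalues * Uᵀ := by
  have hstar : ∀ A : Matrix ι ι ℝ, star A = Aᵀ := fun A => by
    rw [star_eq_conjTranspose, conjTranspose_eq_transpose_of_trivial]
  refine ⟨?_, ?_, ?_⟩
  · rw [← hstar]; exact Unitary.coe_star_mul_self _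
  · rw [← hstar]; exact Unitary.coe_mul_star_self _
  · conv_lhs => rw [hM.spectral_theorem]
    rw [Unitary.conjStarAlgAut_apply, hstar, RCLike.ofReal_real_eq_id, Function.id_comp]

theorem IsHermitian.neg_le_eigenvalues_of_posSemidef_add_smul_one {M : Matrix ι ι ℝ}
    (hM : M.IsHermitian) {c : ℝ} (hc : (M + c • 1).PosSemidef) (i : ι) :
    -c ≤ hM.eigenvalues i := by
  set v := hM.eigenvectorBasis i
  have hv : star ⇑v ⬝ᵥ ⇑v = 1 := by
    rw [dotProduct_comm, ← EuclideanSpace.inner_eq_star_dotProduct, real_inner_self_eq_norm_sq,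
      hM.eigenvectorBasis.orthonormal.1 i, one_pow]
  have := hc.re_dotProduct_nonneg v
  rw [hM.eigenvalues_eq i]
  simp only [add_mulVec, smul_mulVec, one_mulVec, dotProduct_add, dotProduct_smul, hv,
    RCLike.re_to_real, smul_eq_mul, mul_one] at this ⊢
  linarith

end Matrix

section Energy

variable {n : ℕ}

theorem energy_eq_sum_abs_eigenvalues {M : Matrix (Fin n) (Fin n) ℝ} (hM : M.IsHermitian) :
    energy M = ∑ i, |hM.eigenvalues i| :=
  dif_pos hM

theorem energy_nonneg (M : Matrix (Fin n) (Fin n) ℝ) : 0 ≤ energy M := by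
  unfold energy
  split_ifs
  exacts [sum_nonneg fun i _ => abs_nonneg _, le_rfl]

theorem trace_mul_le_energy {M P : Matrix (Fin n) (Fin n) ℝ} (hM : M.IsHermitian)
    (hP : IsSymmContraction P) : (M * P).trace ≤ energy M := by
  obtain ⟨hU, -, hMU⟩ := hM.eq_conj_diagonal_eigenvalues
  rw [energy_eq_sum_abs_eigenvalues hM]
  conv_lhs => rw [hMU]
  exact trace_conj_diagonal_mul_le hU hP _

theorem abs_trace_mul_le_energy {M P : Matrix (Fin n) (Fin n) ℝ} (hM : M.IsHermitian)
    (hP : IsSymmContraction P) : |(M * P).trace| ≤ energy M := by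
  refine abs_le.mpr ⟨?_, trace_mul_le_energy hM hP⟩
  have := trace_mul_le_energy hM hP.neg
  rw [Matrix.mul_neg, trace_neg] at this
  linarith

theorem exists_isSymmContraction_trace_mul_eq_energy {M : Matrix (Fin n) (Fin n) ℝ}
    (hM : M.IsHermitian) : ∃ P, IsSymmContraction P ∧ (M * P).trace = energy M := by
  obtain ⟨hU, hU', hMU⟩ := hM.eq_conj_diagonal_eigenvalues
  rw [energy_eq_sum_abs_eigenvalues hM]
  conv in M * _ => rw [hMU]
  exact exists_isSymmContraction_trace_conj_diagonal_mul_eq hU hU' _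

theorem energy_add_le {X Y : Matrix (Fin n) (Fin n) ℝ} (hX : X.IsHermitian)
    (hY : Y.IsHermitian) : energy (X + Y) ≤ energy X + energy Y := by
  obtain ⟨P, hP, hXY⟩ := exists_isSymmContraction_trace_mul_eq_energy (hX.add hY)
  rw [← hXY, Matrix.add_mul, trace_add]
  exact add_le_add (trace_mul_le_energy hX hP) (trace_mul_le_energy hY hP)

theorem energy_smul_le {M : Matrix (Fin n) (Fin n) ℝ} (hM : M.IsHermitian) (c : ℝ) :
    energy (c • M) ≤ |c| * energy M := by
  obtain ⟨P, hP, hcM⟩ :=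
    exists_isSymmContraction_trace_mul_eq_energy (hM.smul (IsSelfAdjoint.all c))
  rw [← hcM, Matrix.smul_mul, trace_smul, smul_eq_mul]
  calc c * (M * P).trace ≤ |c| * |(M * P).trace| := (le_abs_self _).trans (abs_mul _ _).le
    _ ≤ |c| * energy M := mul_le_mul_of_nonneg_left (abs_trace_mul_le_energy hM hP) (abs_nonneg c)

theorem energy_smul {M : Matrix (Fin n) (Fin n) ℝ} (hM : M.IsHermitian) (c : ℝ) :
    energy (c • M) = |c| * energy M := by
  refine (energy_smul_le hM c).antisymm ?_
  rcases eq_or_ne c 0 with rfl | hc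
  · simpa using energy_nonneg _
  calc |c| * energy M = |c| * energy (c⁻¹ • c • M) := by rw [inv_smul_smul₀ hc]
    _ ≤ |c| * (|c⁻¹| * energy (c • M)) :=
        mul_le_mul_of_nonneg_left (energy_smul_le (hM.smul (IsSelfAdjoint.all c)) _)
          (abs_nonneg c)
    _ = energy (c • M) := by rw [abs_inv, mul_inv_cancel_left₀ (abs_ne_zero.mpr hc)]

theorem abs_energy_add_sub_energy_le {X Y : Matrix (Fin n) (Fin n) ℝ} (hX : X.IsHermitian)
    (hY : Y.IsHermitian) : |energy (X + Y) - energy Y| ≤ energy X := by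
  have hY_le : energy Y ≤ energy (X + Y) + energy X := by
    calc energy Y = energy (X + Y + (-1 : ℝ) • X) := by rw [neg_one_smul, add_neg_cancel_comm]
      _ ≤ energy (X + Y) + energy ((-1 : ℝ) • X) :=
          energy_add_le (hX.add hY) (hX.smul (IsSelfAdjoint.all _))
      _ = energy (X + Y) + energy X := by rw [energy_smul hX, abs_neg, abs_one, one_mul]
  have hXY_le := energy_add_le hX hY
  rw [abs_sub_le_iff]
  constructor <;> linarith

theorem energy_le_of_trace_eq_zero {M : Matrix (Fin n) (Fin n) ℝ} (hM : M.IsHermitian)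
    (htr : M.trace = 0) {c : ℝ} (hc : ∀ i, -c ≤ hM.eigenvalues i) (hn : 0 < n) :
    energy M ≤ 2 * c * (n - 1) := by
  set μ := hM.eigenvalues
  have hsum : ∑ i, μ i = 0 := by simpa [hM.trace_eq_sum_eigenvalues] using htr
  have huniv : (univ : Finset (Fin n)).Nonempty := ⟨⟨0, hn⟩, mem_univ _⟩
  obtain ⟨i₀, -, hi₀⟩ := exists_le_of_sum_le (f := 0) (g := μ) huniv (by simp [hsum])
  obtain ⟨i₁, -, hi₁⟩ := exists_le_of_sum_le (f := μ) (g := 0) huniv (by simp [hsum])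
  have hc₀ : 0 ≤ c := by linarith [hc i₁, show μ i₁ ≤ 0 from hi₁]
  have hterm : ∀ i, |μ i| - μ i ≤ 2 * c := fun i => by
    cases abs_cases (μ i) <;> linarith [hc i]
  -- `|μ i| - μ i` vanishes at the nonnegative eigenvalue `μ i₀` and is at most `2c` elsewhere.
  calc energy M = ∑ i, (|μ i| - μ i) := by
        rw [energy_eq_sum_abs_eigenvalues hM, sum_sub_distrib, hsum, sub_zero]
    _ = ∑ i ∈ univ.erase i₀, (|μ i| - μ i) := by
        rw [← add_sum_erase _ _ (mem_univ i₀), abs_of_nonneg (show 0 ≤ μ i₀ from hi₀), sub_self,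
          zero_add]
    _ ≤ ∑ i ∈ univ.erase i₀, 2 * c := sum_le_sum fun i _ => hterm i
    _ = 2 * c * (n - 1) := by
        rw [sum_const, card_erase_of_mem (mem_univ _), card_univ, Fintype.card_fin, nsmul_eq_mul,
          Nat.cast_sub hn]
        ring

theorem energy_half_smul_ones_sub_one_le (hn : 0 < n) :
    energy ((1 / 2 : ℝ) • (of (fun _ _ : Fin n => (1 : ℝ)) - 1)) ≤ n - 1 := by
  have hB : ((1 / 2 : ℝ) • (of (fun _ _ : Fin n => (1 : ℝ)) - 1)).IsHermitian :=
    (posSemidef_of_fun_one.isHermitian.sub isHermitian_one).smul (IsSelfAdjoint.all _)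
  have hshift : ((1 / 2 : ℝ) • (of (fun _ _ : Fin n => (1 : ℝ)) - 1) +
      (1 / 2 : ℝ) • 1).PosSemidef := by
    rw [← smul_add, sub_add_cancel]
    exact posSemidef_of_fun_one.smul (by norm_num)
  have htr : ((1 / 2 : ℝ) • (of (fun _ _ : Fin n => (1 : ℝ)) - 1)).trace = 0 := by
    simp [trace]
  have := energy_le_of_trace_eq_zero hB htr (hB.neg_le_eigenvalues_of_posSemidef_add_smul_one
    hshift) hn
  linarith

end Energy

namespace SimpleGraph

variable {V : Type*} {G : SimpleGraph V}

theorem Connected.dist_eq_two_of_not_adj (hconn : G.Connected) (hdiam : G.diam = 2) {u v : V}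
    (huv : u ≠ v) (hadj : ¬G.Adj u v) : G.dist u v = 2 := by
  have hle : G.dist u v ≤ 2 :=
    hdiam ▸ dist_le_diam (ediam_ne_top_of_diam_ne_zero (by rw [hdiam]; norm_num))
  have hpos := hconn.pos_dist_of_ne huv
  have hne : G.dist u v ≠ 1 := fun h => hadj (dist_eq_one_iff_adj.mp h)
  omega

noncomputable def hararyMatrix [DecidableEq V] (G : SimpleGraph V) : Matrix V V ℝ :=
  of fun i j => if i = j then 0 else 1 / (G.dist i j : ℝ)

theorem hararyMatrix_eq_of_diam_eq_two [DecidableEq V] [DecidableRel G.Adj]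
    (hconn : G.Connected) (hdiam : G.diam = 2) :
    G.hararyMatrix = (1 / 2 : ℝ) • (of (fun _ _ => (1 : ℝ)) - 1) + (1 / 2 : ℝ) • G.adjMatrix ℝ := by
  ext i j
  by_cases hij : i = j
  · simp [hararyMatrix, hij]
  by_cases hadj : G.Adj i j
  · simp [hararyMatrix, hij, hadj, dist_eq_one_iff_adj.mpr hadj]
    norm_num
  · simp [hararyMatrix, hij, hadj, hconn.dist_eq_two_of_not_adj hdiam hij hadj]

end SimpleGraph

/-- for a connected graph `G` of diameter 2, the Harary matrix
`RD(G)`, with entries `1/D(i,j)` off the diagonal, satisfies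
`RD(G) = (1/2)(J - I) + (1/2)A(G)`, and hence
`|E(RD(G)) - (1/2)E(A(G))| ≤ n - 1`. -/
theorem hararyMatrix_decomposition {n : ℕ}
    (G : SimpleGraph (Fin n)) [DecidableRel G.Adj]
    (hconn : G.Connected) (hdiam : G.diam = 2) :
    (Matrix.of fun i j : Fin n =>
        if i = j then 0 else 1 / (G.dist i j : ℝ)) =
      (1 / 2 : ℝ) • ((Matrix.of fun _ _ => (1 : ℝ)) - (1 : Matrix (Fin n) (Fin n) ℝ)) +
        (1 / 2 : ℝ) • G.adjMatrix ℝ ∧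
      |energy (Matrix.of fun i j : Fin n =>
          if i = j then 0 else 1 / (G.dist i j : ℝ)) -
        (1 / 2) * energy (G.adjMatrix ℝ)| ≤ (n : ℝ) - 1 := by
  have hRD : G.hararyMatrix = _ := G.hararyMatrix_eq_of_diam_eq_two hconn hdiam
  refine ⟨hRD, ?_⟩
  have hA : (G.adjMatrix ℝ).IsHermitian := isHermitian_iff_isSymm.mpr G.isSymm_adjMatrix
  change |energy G.hararyMatrix - _| ≤ _
  have hC : energy ((1 / 2 : ℝ) • G.adjMatrix ℝ) = 1 / 2 * energy (G.adjMatrix ℝ) := by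
    rw [energy_smul hA, abs_of_pos one_half_pos]
  rw [hRD, ← hC]
  calc _ ≤ energy ((1 / 2 : ℝ) • (of (fun _ _ : Fin n => (1 : ℝ)) - 1)) :=
        abs_energy_add_sub_energy_le
          ((posSemidef_of_fun_one.isHermitian.sub isHermitian_one).smul (IsSelfAdjoint.all _))
          (hA.smul (IsSelfAdjoint.all _))
    _ ≤ n - 1 := energy_half_smul_ones_sub_one_le (Fin.pos_iff_nonempty.mpr hconn.nonempty)
end
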